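/- Let X and Y be sets and R ⊆ X × Y a relation whose indicator χ_R has the double limit property. Then: (1) for every ultrafilter U on C_X(R), the set d_U belongs to C_Y(R) (types are definable); (2) for every ultrafilter V on C_Y(R), the set e_V belongs to C_X(R); and (3) for all such U and V, d_U ∈ V if and only if e_V ∈ U. -/
import Mathlib


open Filter Topology

/-- A Boolean algebra of sets on `X`: contains `∅` and `univ`, closed under
finite unions, finite intersections and complements. -/
def IsBoolAlg {X : Type*} (C : Set (Set X)) : Prop :=
  ∅ ∈ C ∧ Set.univ ∈ C ∧
    (∀ A ∈ C, ∀ B ∈ C, A ∪ B ∈ C) ∧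
    (∀ A ∈ C, ∀ B ∈ C, A ∩ B ∈ C) ∧
    (∀ A ∈ C, Aᶜ ∈ C)

/-- An ultrafilter on a Boolean algebra of sets `C`. -/
def IsUltraOn {X : Type*} (C : Set (Set X)) (U : Set (Set X)) : Prop :=
  U ⊆ C ∧ ∅ ∉ U ∧ Set.univ ∈ U ∧
    (∀ A ∈ U, ∀ B ∈ U, A ∩ B ∈ U) ∧
    (∀ A ∈ U, ∀ B ∈ C, A ⊆ B → B ∈ U) ∧
    (∀ A ∈ C, A ∈ U ∨ Aᶜ ∈ U)

/-- A finitely additive probability measure on `C`. -/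
def IsFAP {X : Type*} (C : Set (Set X)) (μ : Set X → ℝ) : Prop :=
  (∀ A ∈ C, 0 ≤ μ A) ∧ μ Set.univ = 1 ∧
    (∀ A ∈ C, ∀ B ∈ C, A ∩ B = ∅ → μ (A ∪ B) = μ A + μ B)

/-- `μ` is strongly continuous on `C`: for every `ε > 0` there is a finite
partition of `X` into members of `C`, each of measure `< ε`. -/
def StrongCont {X : Type*} (C : Set (Set X)) (μ : Set X → ℝ) : Prop :=
  ∀ ε : ℝ, 0 < ε → ∃ (n : ℕ) (F : Fin n → Set X),
    (∀ i, F i ∈ C) ∧ (⋃ i, F i) = Set.univ ∧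
    (∀ i j, i ≠ j → F i ∩ F j = ∅) ∧ ∀ i, μ (F i) < ε

/-- `μ` is `{0,1}`-valued on `C`. -/
def ZeroOneValued {X : Type*} (C : Set (Set X)) (μ : Set X → ℝ) : Prop :=
  ∀ A ∈ C, μ A = 0 ∨ μ A = 1

/-- A 2-tree in `C`: an injective map from finite binary strings into `C` such
that children are strictly below their parent and the two children of a node
are disjoint. -/
def IsTwoTree {X : Type*} (C : Set (Set X)) (t : List Bool → Set X) : Prop :=
  Function.Injective t ∧ (∀ s, t s ∈ C) ∧
    (∀ s b, t (s ++ [b]) ⊂ t s) ∧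
    ∀ s, t (s ++ [false]) ∩ t (s ++ [true]) = ∅

/-- The double limit property for `f : A × B → ℝ`: whenever both iterated
limits along sequences exist, they are equal. -/
def DLP {A B : Type*} (f : A → B → ℝ) : Prop :=
  ∀ (a : ℕ → A) (b : ℕ → B) (u v : ℕ → ℝ) (L L' : ℝ),
    (∀ i, Tendsto (fun j => f (a i) (b j)) atTop (𝓝 (u i))) →
    Tendsto u atTop (𝓝 L) →
    (∀ j, Tendsto (fun i => f (a i) (b j)) atTop (𝓝 (v j))) →
    Tendsto v atTop (𝓝 L') → L = L'

-- The indicator `χ_R` of a relation `R ⊆ X × Y`.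
open Classical in
noncomputable def chi {X Y : Type*} (R : Set (X × Y)) : X → Y → ℝ :=
  fun a b => if (a, b) ∈ R then 1 else 0

/-- The Boolean algebra of sets generated by `S`. -/
def genAlg {X : Type*} (S : Set (Set X)) : Set (Set X) :=
  ⋂₀ {C : Set (Set X) | IsBoolAlg C ∧ S ⊆ C}

/-- `C_X(R)`: the Boolean algebra on `X` generated by the columns of `R`. -/
def colAlg {X Y : Type*} (R : Set (X × Y)) : Set (Set X) :=
  genAlg {A | ∃ b : Y, A = {x : X | (x, b) ∈ R}}

/-- `C_Y(R)`: the Boolean algebra on `Y` generated by the rows of `R`. -/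
def rowAlg {X Y : Type*} (R : Set (X × Y)) : Set (Set Y) :=
  genAlg {B | ∃ a : X, B = {y : Y | (a, y) ∈ R}}

/-- `d_U = {b ∈ Y : {x : (x,b) ∈ R} ∈ U}`. -/
def dSet {X Y : Type*} (R : Set (X × Y)) (U : Set (Set X)) : Set Y :=
  {b : Y | {x : X | (x, b) ∈ R} ∈ U}

/-- `e_V = {a ∈ X : {y : (a,y) ∈ R} ∈ V}`. -/
def eSet {X Y : Type*} (R : Set (X × Y)) (V : Set (Set Y)) : Set X :=
  {a : X | {y : Y | (a, y) ∈ R} ∈ V}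

/-- Membership in `conv_δ(Z)`: a nonnegative, countably supported weight
function summing to `1`. -/
def IsConvDelta {Z : Type*} (p : Z → ℝ) : Prop :=
  (∀ z, 0 ≤ p z) ∧ (Function.support p).Countable ∧ HasSum p 1

/-- `f_c(p, q) = ∑_{(x,y)} p(x) q(y) f(x,y)`. -/
noncomputable def fc {X Y : Type*} (f : X → Y → ℝ) (p : X → ℝ) (q : Y → ℝ) : ℝ :=
  ∑' z : X × Y, p z.1 * q z.2 * f z.1 z.2

/-- The `k`-order property for a relation `R ⊆ X × Y`. -/
def HasKOrderProp {X Y : Type*} (R : Set (X × Y)) (k : ℕ) : Prop :=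
  ∃ (a : Fin k → X) (b : Fin k → Y), ∀ i j, (a i, b j) ∈ R ↔ i < j

-- The pairing `χ(U, V)` on ultrafilters: `1` if `d_U ∈ V`, else `0`.
open Classical in
noncomputable def chiU {X Y : Type*} (R : Set (X × Y))
    (U : {U : Set (Set X) // IsUltraOn (colAlg R) U})
    (V : {V : Set (Set Y) // IsUltraOn (rowAlg R) V}) : ℝ :=
  if dSet R U.1 ∈ V.1 then 1 else 0

/-- `𝓕` shatters the finite set `S`. -/
def ShattersSet {X : Type*} (F : Set (Set X)) (S : Finset X) : Prop :=
  ∀ T ⊆ S, ∃ A ∈ F, A ∩ ↑S = (↑T : Set X)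

/-- An atomic probability measure on `X`. -/
def IsAtomicMeasure {X : Type*} (μ : Set X → ℝ) : Prop :=
  ∃ (I : Set ℕ) (x : ℕ → X) (r : ℕ → ℝ),
    (∀ i ∈ I, 0 ≤ r i) ∧ HasSum (fun i : I => r (i : ℕ)) 1 ∧
    ∀ A : Set X, μ A = ∑' i : {i : ℕ // i ∈ I ∧ x i ∈ A}, r (i : ℕ)

section AuxStability

variable {X Y : Type*}

lemma subset_genAlg (S : Set (Set X)) : S ⊆ genAlg S :=
  fun _A hA => Set.mem_sInter.2 fun _C hC => hC.2 hA

lemma isBoolAlg_genAlg (S : Set (Set X)) : IsBoolAlg (genAlg S) :=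
  ⟨Set.mem_sInter.2 fun _C hC => hC.1.1,
   Set.mem_sInter.2 fun _C hC => hC.1.2.1,
   fun A hA B hB => Set.mem_sInter.2 fun C hC =>
     hC.1.2.2.1 A (Set.mem_sInter.1 hA C hC) B (Set.mem_sInter.1 hB C hC),
   fun A hA B hB => Set.mem_sInter.2 fun C hC =>
     hC.1.2.2.2.1 A (Set.mem_sInter.1 hA C hC) B (Set.mem_sInter.1 hB C hC),
   fun A hA => Set.mem_sInter.2 fun C hC =>
     hC.1.2.2.2.2 A (Set.mem_sInter.1 hA C hC)⟩

lemma col_mem_colAlg (R : Set (X × Y)) (b : Y) : {x : X | (x, b) ∈ R} ∈ colAlg R :=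
  subset_genAlg _ ⟨b, rfl⟩

lemma row_mem_rowAlg (R : Set (X × Y)) (a : X) : {y : Y | (a, y) ∈ R} ∈ rowAlg R :=
  subset_genAlg _ ⟨a, rfl⟩

lemma ultra_biInter {C U : Set (Set X)} (hU : IsUltraOn C U) {α : Type*}
    (s : Finset α) (g : α → Set X) (hg : ∀ a ∈ s, g a ∈ U) : (⋂ a ∈ s, g a) ∈ U := by
  classical
  induction s using Finset.induction_on with
  | empty => simpa using hU.2.2.1
  | @insert a s ha ih =>
    rw [Finset.set_biInter_insert]
    exact hU.2.2.2.1 _ (hg a (Finset.mem_insert_self a s)) _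
      (ih fun x hx => hg x (Finset.mem_insert_of_mem hx))

lemma ultra_nonempty {C U : Set (Set X)} (hU : IsUltraOn C U) {A : Set X}
    (hA : A ∈ U) : A.Nonempty := by
  rcases A.eq_empty_or_nonempty with rfl | hne
  · exact absurd hA hU.2.1
  · exact hne

lemma ultra_compl {C U : Set (Set X)} (hU : IsUltraOn C U) {A : Set X}
    (hC : A ∈ C) (h : A ∉ U) : Aᶜ ∈ U :=
  (hU.2.2.2.2.2 A hC).resolve_left h

lemma chi_of_mem {R : Set (X × Y)} {a : X} {b : Y} (h : (a, b) ∈ R) :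
    chi R a b = 1 := if_pos h

lemma chi_of_not_mem {R : Set (X × Y)} {a : X} {b : Y} (h : (a, b) ∉ R) :
    chi R a b = 0 := if_neg h

lemma chi_mem_Icc (R : Set (X × Y)) (a : X) (b : Y) :
    chi R a b ∈ Set.Icc (0 : ℝ) 1 := by
  unfold chi
  split <;> norm_num

lemma invariant_mem_rowAlg (R : Set (X × Y)) (G : Finset X) :
    ∀ D : Set Y, (∀ b b', (∀ a ∈ G, ((a, b) ∈ R ↔ (a, b') ∈ R)) → b ∈ D → b' ∈ D) →
      D ∈ rowAlg R := by
  classical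
  have hBA : IsBoolAlg (rowAlg R) := isBoolAlg_genAlg _
  induction G using Finset.induction_on with
  | empty =>
    intro D hinv
    rcases D.eq_empty_or_nonempty with rfl | ⟨b, hb⟩
    · exact hBA.1
    · have : D = Set.univ := Set.eq_univ_of_forall fun b' => hinv b b' (by simp) hb
      rw [this]; exact hBA.2.1
  | @insert a G' hnG ih =>
    intro D hinv
    set Dp : Set Y :=
      {b' | ∃ b ∈ D, (a, b) ∈ R ∧ ∀ x ∈ G', ((x, b) ∈ R ↔ (x, b') ∈ R)} with hDpdef
    set Dm : Set Y :=
      {b' | ∃ b ∈ D, (a, b) ∉ R ∧ ∀ x ∈ G', ((x, b) ∈ R ↔ (x, b') ∈ R)} with hDmdef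
    have hDp : Dp ∈ rowAlg R := by
      refine ih _ ?_
      rintro b b' hpat ⟨c, hc, hcr, hcp⟩
      exact ⟨c, hc, hcr, fun x hx => (hcp x hx).trans (hpat x hx)⟩
    have hDm : Dm ∈ rowAlg R := by
      refine ih _ ?_
      rintro b b' hpat ⟨c, hc, hcr, hcp⟩
      exact ⟨c, hc, hcr, fun x hx => (hcp x hx).trans (hpat x hx)⟩
    have hEq : D = ({y | (a, y) ∈ R} ∩ Dp) ∪ ({y | (a, y) ∈ R}ᶜ ∩ Dm) := by
      ext b'
      constructor
      · intro hb'
        by_cases hab : (a, b') ∈ R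
        · exact Or.inl ⟨hab, b', hb', hab, fun x _ => Iff.rfl⟩
        · exact Or.inr ⟨hab, b', hb', hab, fun x _ => Iff.rfl⟩
      · rintro (⟨hab, c, hc, hcr, hcp⟩ | ⟨hab, c, hc, hcr, hcp⟩)
        · refine hinv c b' ?_ hc
          intro x hx
          rcases Finset.mem_insert.1 hx with rfl | hx'
          · exact iff_of_true hcr hab
          · exact hcp x hx'
        · refine hinv c b' ?_ hc
          intro x hx
          rcases Finset.mem_insert.1 hx with rfl | hx'
          · exact iff_of_false hcr hab
          · exact hcp x hx'
    rw [hEq]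
    have hRa := row_mem_rowAlg R a
    exact hBA.2.2.1 _ (hBA.2.2.2.1 _ hRa _ hDp) _
      (hBA.2.2.2.1 _ (hBA.2.2.2.2 _ hRa) _ hDm)

/-- Part (1): every ultrafilter on the column algebra has definable `d_U`. -/
theorem dSet_mem_rowAlg (R : Set (X × Y)) (h : DLP (chi R))
    (U : Set (Set X)) (hU : IsUltraOn (colAlg R) U) : dSet R U ∈ rowAlg R := by
  classical
  by_contra hnd
  set D := dSet R U with hD
  have key : ∀ G : Finset X, ∃ b b', b ∈ D ∧ b' ∉ D ∧
      ∀ a ∈ G, ((a, b) ∈ R ↔ (a, b') ∈ R) := by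
    intro G
    by_contra hc
    push_neg at hc
    refine hnd (invariant_mem_rowAlg R G D ?_)
    intro b b' hpat hb
    by_contra hb'
    obtain ⟨x, hx, hnx⟩ := hc b b' hb hb'
    rcases hnx with ⟨hx1, hx2⟩ | ⟨hx1, hx2⟩
    · exact hx2 ((hpat x hx).1 hx1)
    · exact hx1 ((hpat x hx).2 hx2)
  have hstep : ∀ s : Finset (X × Y × Y),
      (∀ v ∈ s, v.2.1 ∈ D ∧ v.2.2 ∉ D ∧ (v.1, v.2.1) ∈ R ∧ (v.1, v.2.2) ∉ R) →
      ∃ w : X × Y × Y, (w.2.1 ∈ D ∧ w.2.2 ∉ D ∧ (w.1, w.2.1) ∈ R ∧ (w.1, w.2.2) ∉ R) ∧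
        ∀ v ∈ s, (w.1, v.2.1) ∈ R ∧ (w.1, v.2.2) ∉ R ∧
          ((v.1, w.2.1) ∈ R ↔ (v.1, w.2.2) ∈ R) := by
    intro s hs
    obtain ⟨b, b', hb, hb', hpat⟩ := key (s.image (fun v => v.1))
    have hbU : {x : X | (x, b) ∈ R} ∈ U := hb
    have hb'U : {x : X | (x, b') ∈ R}ᶜ ∈ U :=
      ultra_compl hU (col_mem_colAlg R b') hb'
    have hIn : (({x : X | (x, b) ∈ R} ∩ {x : X | (x, b') ∈ R}ᶜ) ∩
        ⋂ v ∈ s, ({x : X | (x, v.2.1) ∈ R} ∩ {x : X | (x, v.2.2) ∈ R}ᶜ)) ∈ U := by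
      refine hU.2.2.2.1 _ (hU.2.2.2.1 _ hbU _ hb'U) _ (ultra_biInter hU s _ ?_)
      intro v hv
      exact hU.2.2.2.1 _ (hs v hv).1 _
        (ultra_compl hU (col_mem_colAlg R v.2.2) (hs v hv).2.1)
    obtain ⟨aa, ⟨ha1, ha2⟩, ha3⟩ := ultra_nonempty hU hIn
    refine ⟨(aa, b, b'), ⟨hb, hb', ha1, ha2⟩, ?_⟩
    intro v hv
    have h3 := Set.mem_iInter₂.1 ha3 v hv
    exact ⟨h3.1, h3.2, hpat v.1 (Finset.mem_image_of_mem _ hv)⟩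
  obtain ⟨f, hP, hr⟩ := exists_seq_of_forall_finset_exists _ _ hstep
  set a : ℕ → X := fun n => (f n).1 with ha
  set b : ℕ → Y := fun n => (f n).2.1 with hb
  set b' : ℕ → Y := fun n => (f n).2.2 with hb'
  have hle : ∀ i j, j ≤ i → (a i, b j) ∈ R ∧ (a i, b' j) ∉ R := by
    intro i j hji
    rcases eq_or_lt_of_le hji with rfl | hlt
    · exact ⟨(hP j).2.2.1, (hP j).2.2.2⟩
    · exact ⟨(hr j i hlt).1, (hr j i hlt).2.1⟩
  have hgt : ∀ i j, i < j → ((a i, b j) ∈ R ↔ (a i, b' j) ∈ R) :=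
    fun i j hij => (hr i j hij).2.2
  set K : Set (ℕ → ℝ × ℝ) :=
    Set.pi Set.univ fun _ : ℕ => (Set.Icc (0 : ℝ) 1) ×ˢ (Set.Icc (0 : ℝ) 1) with hK
  have hcomp : IsCompact K :=
    isCompact_univ_pi fun _ => isCompact_Icc.prod isCompact_Icc
  set F : ℕ → (ℕ → ℝ × ℝ) :=
    fun j m => (chi R (a m) (b j), chi R (a m) (b' j)) with hF
  have hFmem : ∀ j, F j ∈ K := by
    intro j m _
    exact ⟨chi_mem_Icc R _ _, chi_mem_Icc R _ _⟩
  obtain ⟨g, -, φ, hφ, hFg⟩ := hcomp.tendsto_subseq hFmem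
  have hcoord : ∀ m, Tendsto (fun j => F (φ j) m) atTop (𝓝 (g m)) := by
    rw [tendsto_pi_nhds] at hFg
    exact hFg
  have h1 : ∀ m, Tendsto (fun j => chi R (a m) (b (φ j))) atTop (𝓝 (g m).1) :=
    fun m => (continuous_fst.tendsto (g m)).comp (hcoord m)
  have h2 : ∀ m, Tendsto (fun j => chi R (a m) (b' (φ j))) atTop (𝓝 (g m).2) :=
    fun m => (continuous_snd.tendsto (g m)).comp (hcoord m)
  have hgeq : ∀ m, (g m).1 = (g m).2 := by
    intro m
    refine tendsto_nhds_unique ((h1 m).congr' ?_) (h2 m)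
    filter_upwards [eventually_ge_atTop (m + 1)] with j hj
    have hmj : m < φ j := lt_of_lt_of_le (Nat.lt_of_lt_of_le (Nat.lt_succ_self m) hj) hφ.le_apply
    rcases Classical.em ((a m, b (φ j)) ∈ R) with hmem | hmem
    · rw [chi_of_mem hmem, chi_of_mem ((hgt m (φ j) hmj).1 hmem)]
    · rw [chi_of_not_mem hmem, chi_of_not_mem (fun hm => hmem ((hgt m (φ j) hmj).2 hm))]
  have humem : ∀ m, (g m).1 ∈ Set.Icc (0 : ℝ) 1 := fun m =>
    isClosed_Icc.mem_of_tendsto (h1 m)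
      (Filter.Eventually.of_forall fun j => chi_mem_Icc R _ _)
  obtain ⟨L, -, ψ, hψ, hL⟩ := isCompact_Icc.tendsto_subseq humem
  have hv1 : ∀ j, Tendsto (fun i => chi R (a (ψ i)) (b (φ j))) atTop (𝓝 1) := by
    intro j
    refine tendsto_const_nhds.congr' ?_
    filter_upwards [eventually_ge_atTop (φ j)] with i hi
    exact (chi_of_mem (hle (ψ i) (φ j) (le_trans hi hψ.le_apply)).1).symm
  have hv0 : ∀ j, Tendsto (fun i => chi R (a (ψ i)) (b' (φ j))) atTop (𝓝 0) := by
    intro j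
    refine tendsto_const_nhds.congr' ?_
    filter_upwards [eventually_ge_atTop (φ j)] with i hi
    exact (chi_of_not_mem (hle (ψ i) (φ j) (le_trans hi hψ.le_apply)).2).symm
  have hL1 : L = 1 :=
    h (fun i => a (ψ i)) (fun j => b (φ j)) (fun i => (g (ψ i)).1) (fun _ => 1) L 1
      (fun i => h1 (ψ i)) hL hv1 tendsto_const_nhds
  have hL0 : L = 0 :=
    h (fun i => a (ψ i)) (fun j => b' (φ j)) (fun i => (g (ψ i)).1) (fun _ => 0) L 0
      (fun i => by simpa only [hgeq (ψ i)] using h2 (ψ i)) hL hv0 tendsto_const_nhds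
  exact one_ne_zero (hL1.symm.trans hL0)

/-- The transposed relation. -/
def swapRel (R : Set (X × Y)) : Set (Y × X) := {p | (p.2, p.1) ∈ R}

lemma DLP_swap {R : Set (X × Y)} (h : DLP (chi R)) : DLP (chi (swapRel R)) := by
  intro aa bb u v L L' h1 h2 h3 h4
  exact (h bb aa v u L' L h3 h4 h1 h2).symm

lemma colAlg_swap (R : Set (X × Y)) : colAlg (swapRel R) = rowAlg R := rfl

lemma rowAlg_swap (R : Set (X × Y)) : rowAlg (swapRel R) = colAlg R := rfl

lemma dSet_swap (R : Set (X × Y)) (V : Set (Set Y)) : dSet (swapRel R) V = eSet R V := rfl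

lemma eSet_swap (R : Set (X × Y)) (U : Set (Set X)) : eSet (swapRel R) U = dSet R U := rfl

/-- One direction of symmetry. -/
theorem dir_dV_eU (R : Set (X × Y)) (h : DLP (chi R))
    (U : Set (Set X)) (V : Set (Set Y))
    (hU : IsUltraOn (colAlg R) U) (hV : IsUltraOn (rowAlg R) V)
    (heV : eSet R V ∈ colAlg R) (hd : dSet R U ∈ V) : eSet R V ∈ U := by
  classical
  by_contra hne
  have hEc : (eSet R V)ᶜ ∈ U := ultra_compl hU heV hne
  have hstep : ∀ s : Finset (X × Y),
      (∀ v ∈ s, v.2 ∈ dSet R U ∧ v.1 ∉ eSet R V ∧ (v.1, v.2) ∉ R) →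
      ∃ w : X × Y, (w.2 ∈ dSet R U ∧ w.1 ∉ eSet R V ∧ (w.1, w.2) ∉ R) ∧
        ∀ v ∈ s, (w.1, v.2) ∈ R ∧ (v.1, w.2) ∉ R := by
    intro s hs
    have hIn : ((eSet R V)ᶜ ∩ ⋂ v ∈ s, {x : X | (x, v.2) ∈ R}) ∈ U :=
      hU.2.2.2.1 _ hEc _ (ultra_biInter hU s _ fun v hv => (hs v hv).1)
    obtain ⟨aa, ha1, ha2⟩ := ultra_nonempty hU hIn
    have haRow : {y : Y | (aa, y) ∈ R}ᶜ ∈ V :=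
      ultra_compl hV (row_mem_rowAlg R aa) ha1
    have hbIn : ((dSet R U ∩ {y : Y | (aa, y) ∈ R}ᶜ) ∩
        ⋂ v ∈ s, {y : Y | (v.1, y) ∈ R}ᶜ) ∈ V := by
      refine hV.2.2.2.1 _ (hV.2.2.2.1 _ hd _ haRow) _ (ultra_biInter hV s _ ?_)
      intro v hv
      exact ultra_compl hV (row_mem_rowAlg R v.1) (hs v hv).2.1
    obtain ⟨bb, ⟨hb1, hb2⟩, hb3⟩ := ultra_nonempty hV hbIn
    refine ⟨(aa, bb), ⟨hb1, ha1, hb2⟩, ?_⟩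
    intro v hv
    exact ⟨Set.mem_iInter₂.1 ha2 v hv, Set.mem_iInter₂.1 hb3 v hv⟩
  obtain ⟨f, hP, hr⟩ := exists_seq_of_forall_finset_exists _ _ hstep
  set a : ℕ → X := fun n => (f n).1 with ha
  set b : ℕ → Y := fun n => (f n).2 with hb
  have hlt : ∀ i j, j < i → (a i, b j) ∈ R := fun i j hji => (hr j i hji).1
  have hge : ∀ i j, i ≤ j → (a i, b j) ∉ R := by
    intro i j hij
    rcases eq_or_lt_of_le hij with rfl | hlt'
    · exact (hP i).2.2
    · exact (hr i j hlt').2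
  have hu : ∀ i, Tendsto (fun j => chi R (a i) (b j)) atTop (𝓝 0) := by
    intro i
    refine tendsto_const_nhds.congr' ?_
    filter_upwards [eventually_ge_atTop i] with j hj
    exact (chi_of_not_mem (hge i j hj)).symm
  have hv : ∀ j, Tendsto (fun i => chi R (a i) (b j)) atTop (𝓝 1) := by
    intro j
    refine tendsto_const_nhds.congr' ?_
    filter_upwards [eventually_ge_atTop (j + 1)] with i hi
    exact (chi_of_mem (hlt i j hi)).symm
  exact zero_ne_one
    (h a b (fun _ => 0) (fun _ => 1) 0 1 hu tendsto_const_nhds hv tendsto_const_nhds)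

end AuxStability

/-- if the indicator of `R` has the double limit property, then
every ultrafilter on `C_X(R)` is definable (`d_U ∈ C_Y(R)`), every ultrafilter
on `C_Y(R)` is definable (`e_V ∈ C_X(R)`), and symmetry holds:
`d_U ∈ V ↔ e_V ∈ U`. -/
theorem types_definable_and_symmetric {X Y : Type*} (R : Set (X × Y))
    (h : DLP (chi R)) :
    (∀ U : Set (Set X), IsUltraOn (colAlg R) U → dSet R U ∈ rowAlg R) ∧
    (∀ V : Set (Set Y), IsUltraOn (rowAlg R) V → eSet R V ∈ colAlg R) ∧
    ∀ (U : Set (Set X)) (V : Set (Set Y)),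
      IsUltraOn (colAlg R) U → IsUltraOn (rowAlg R) V →
      (dSet R U ∈ V ↔ eSet R V ∈ U) := by
  refine ⟨dSet_mem_rowAlg R h, fun V hV => dSet_mem_rowAlg (swapRel R) (DLP_swap h) V hV,
    fun U V hU hV => ?_⟩
  constructor
  · intro hd
    exact dir_dV_eU R h U V hU hV (dSet_mem_rowAlg (swapRel R) (DLP_swap h) V hV) hd
  · intro he
    exact dir_dV_eU (swapRel R) (DLP_swap h) V U hV hU (dSet_mem_rowAlg R h U hU) he
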